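/- arXiv:1606.05380 — 3 statements merged into one kernel-verified Lean document; each statement's English description precedes it below -/
import Mathlib

section
/- Let Γ be a strongly regular graph with a partition of its vertex set into two parts X and Y such that (I) the subgraph induced on X is regular, and (II) every vertex in Y is adjacent to exactly 0, |X|/2, or |X| vertices of X. Define Γ' on the same vertex set by keeping all edges except that each vertex R in Y with exactly |X|/2 neighbours in X has those edges deleted and is instead joined to the other |X|/2 vertices of X. Then Γ' is a strongly regular graph with the same parameters (v,k,λ,μ) as Γ. -/
section Defs

variable {K V : Type*} [Field K] [AddCommGroup V] [Module K V]

/-- A submodule is totally singular for `Q` if `Q` vanishes on it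
(i.e. the corresponding projective subspace is contained in the quadric). -/
def totallySingular (Q : QuadraticForm K V) (W : Submodule K V) : Prop :=
  ∀ v ∈ W, Q v = 0

/-- The quadric defined by `Q` is non-singular: no nonzero singular vector lies
in the radical of the polar form. -/
def quadricNonsingular (Q : QuadraticForm K V) : Prop :=
  ∀ v : V, v ≠ 0 → Q v = 0 → ∃ w : V, QuadraticMap.polar ⇑Q v w ≠ 0

/-- The quadric of `Q` has projective index `g`: it contains a projective subspace of
dimension `g` and none of larger dimension. -/
def projIndex (Q : QuadraticForm K V) (g : ℕ) : Prop :=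
  (∃ W : Submodule K V, totallySingular Q W ∧ Module.finrank K W = g + 1) ∧
  ∀ W : Submodule K V, totallySingular Q W → Module.finrank K W ≤ g + 1

/-- A generator: a `g`-dimensional projective subspace contained in the quadric. -/
def isGenerator (Q : QuadraticForm K V) (g : ℕ) (W : Submodule K V) : Prop :=
  totallySingular Q W ∧ Module.finrank K W = g + 1

/-- The points of the quadric, as projective points. -/
abbrev QuadricPoint (Q : QuadraticForm K V) :=
  {p : Projectivization K V // Q p.rep = 0}

/-- The point-graph of the quadric: two points are adjacent when the line joining them
is contained in the quadric. -/
def pointGraph (Q : QuadraticForm K V) : SimpleGraph (QuadricPoint Q) where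
  Adj p q := p ≠ q ∧ totallySingular Q (p.1.submodule ⊔ q.1.submodule)
  symm := by
    constructor
    rintro p q ⟨h1, h2⟩
    exact ⟨h1.symm, by rwa [sup_comm]⟩
  loopless := by constructor; rintro p ⟨h1, -⟩; exact h1 rfl

/-- Type (ii) points relative to `α`: points outside `α` lying in an
`(s+1)`-space of the quadric through `α`. -/
def typeII (Q : QuadraticForm K V) (α : Submodule K V) (p : QuadricPoint Q) : Prop :=
  p.1.rep ∉ α ∧ totallySingular Q (α ⊔ p.1.submodule)

/-- Type (iii) points relative to `α`: the remaining points outside `α`. -/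
def typeIII (Q : QuadraticForm K V) (α : Submodule K V) (p : QuadricPoint Q) : Prop :=
  p.1.rep ∉ α ∧ ¬ totallySingular Q (α ⊔ p.1.submodule)

/-- A pair of points, one of type (ii), the other of type (iii). -/
def mixedPair (Q : QuadraticForm K V) (α : Submodule K V) (p q : QuadricPoint Q) : Prop :=
  (typeII Q α p ∧ typeIII Q α q) ∨ (typeII Q α q ∧ typeIII Q α p)

lemma mixedPair_comm (Q : QuadraticForm K V) (α : Submodule K V) (p q : QuadricPoint Q) :
    mixedPair Q α p q ↔ mixedPair Q α q p := by
  unfold mixedPair; exact or_comm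

/-- The line joining `p` and `q` is a 2-secant: it meets the quadric in exactly two points. -/
def secant2 (Q : QuadraticForm K V) (p q : QuadricPoint Q) : Prop :=
  {x : Projectivization K V | x.rep ∈ p.1.submodule ⊔ q.1.submodule ∧ Q x.rep = 0}.ncard = 2

lemma secant2_comm (Q : QuadraticForm K V) (p q : QuadricPoint Q) :
    secant2 Q p q ↔ secant2 Q q p := by
  unfold secant2; rw [sup_comm]

/-- The switched graph `Γ_s`: same as the point-graph, except that a type (ii) point and a
type (iii) point are adjacent iff their joining line is a 2-secant of the quadric. -/
def gammaS (Q : QuadraticForm K V) (α : Submodule K V) : SimpleGraph (QuadricPoint Q) where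
  Adj p q := p ≠ q ∧ (mixedPair Q α p q → secant2 Q p q) ∧
    (¬ mixedPair Q α p q → totallySingular Q (p.1.submodule ⊔ q.1.submodule))
  symm := by
    constructor
    rintro p q ⟨h1, h2, h3⟩
    refine ⟨h1.symm, fun h => (secant2_comm Q p q).mp (h2 ((mixedPair_comm Q α q p).mp h)),
      fun h => ?_⟩
    have := h3 (fun hx => h ((mixedPair_comm Q α p q).mp hx))
    rwa [sup_comm]
  loopless := by constructor; rintro p ⟨h1, -⟩; exact h1 rfl

/-- `v` has exactly half of the vertices of `X` as neighbours. -/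
def halfIn {Ω : Type*} (G : SimpleGraph Ω) (X : Set Ω) (v : Ω) : Prop :=
  2 * (X ∩ G.neighborSet v).ncard = X.ncard

/-- The Godsil–McKay switch of `G` with respect to the part `X`: every vertex outside `X`
having exactly half of `X` as neighbours has its edges to `X` complemented. -/
def gmSwitch {Ω : Type*} (G : SimpleGraph Ω) (X : Set Ω) : SimpleGraph Ω where
  Adj v w :=
    (((v ∈ X ∧ w ∉ X ∧ halfIn G X w) ∨ (w ∈ X ∧ v ∉ X ∧ halfIn G X v)) ∧
        ¬ G.Adj v w ∧ v ≠ w) ∨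
    (¬ ((v ∈ X ∧ w ∉ X ∧ halfIn G X w) ∨ (w ∈ X ∧ v ∉ X ∧ halfIn G X v)) ∧ G.Adj v w)
  symm := by
    constructor
    rintro v w (⟨h1, h2, h3⟩ | ⟨h1, h2⟩)
    · exact Or.inl ⟨h1.symm, fun h => h2 h.symm, h3.symm⟩
    · exact Or.inr ⟨fun h => h1 h.symm, h2.symm⟩
  loopless := by
    constructor
    rintro v (⟨h1, h2, h3⟩ | ⟨h1, h2⟩)
    · exact h3 rfl
    · exact G.loopless.irrefl v h2

noncomputable instance {K V : Type*} [Field K] [AddCommGroup V] [Module K V] [Finite V]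
    (Q : QuadraticForm K V) : Fintype (QuadricPoint Q) := by
  have : Finite (Projectivization K V) := Quotient.finite _
  exact Fintype.ofFinite _

end Defs

/-!
Let `Q` be the symmetric matrix equal to `(2/|X|) J - I` on `X × X` and to the identity elsewhere.
It is an involution with `Q J = J Q = J`. Conditions (I) and (II) make `Q A Q` the adjacency
matrix `A'` of the switched graph: regularity of `X` makes the `X × X` block of `A` commute with
`J`, and a column of `A` indexed outside `X` meets `X` in `0`, `|X|` or `|X|/2` ones, which
`(2/|X|) J - I` fixes in the first two cases and complements in the third. Conjugating
`A² = k I + λ A + μ (J - I - A)` by `Q` therefore gives the same identity for `A'`.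
-/

namespace SimpleGraph

open Matrix

variable {V : Type*} [Fintype V] [DecidableEq V] (G : SimpleGraph V) [DecidableRel G.Adj]

theorem adjMatrix_sq_apply {α : Type*} [Semiring α] (v w : V) :
    (G.adjMatrix α ^ 2) v w = Fintype.card (G.commonNeighbors v w) := by
  rw [adjMatrix_pow_apply_eq_card_walk]
  exact congrArg Nat.cast (Fintype.card_congr (G.walkLengthTwoEquivCommonNeighbors v w))

omit [Fintype V] in
theorem adjMatrix_compl {α : Type*} [AddGroupWithOne α] :
    Gᶜ.adjMatrix α = of 1 - 1 - G.adjMatrix α := by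
  ext v w
  by_cases hvw : v = w
  · subst hvw; simp
  · by_cases h : G.Adj v w <;> simp [hvw, h, one_apply_ne hvw]

theorem isSRGWith_of_adjMatrix_sq {α : Type*} [Semiring α] [CharZero α] {n k ℓ μ : ℕ}
    (hcard : Fintype.card V = n)
    (h : G.adjMatrix α ^ 2 =
      k • (1 : Matrix V V α) + ℓ • G.adjMatrix α + μ • Gᶜ.adjMatrix α) :
    G.IsSRGWith n k ℓ μ := by
  have entry (v w : V) := congrFun₂ h v w
  simp only [adjMatrix_sq_apply, Matrix.add_apply, Matrix.smul_apply] at entry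
  refine ⟨hcard, fun v => ?_, fun v w hvw => ?_, fun v w hne hvw => ?_⟩
  · have := entry v v
    rw [← card_neighborSet_eq_degree]
    simpa [nsmul_eq_mul, commonNeighbors] using this
  · have := entry v w
    simpa [hvw, hvw.ne, nsmul_eq_mul] using this
  · have := entry v w
    simpa [hvw, hne, nsmul_eq_mul] using this

end SimpleGraph

theorem sq_eq_of_conj_involution {R : Type*} [Ring R] {Q A A' J : R} {k ℓ μ : ℕ}
    (hQ : Q * Q = 1) (hQJ : Q * J = J) (hJQ : J * Q = J) (hA : Q * A * Q = A')
    (h : A ^ 2 = k • 1 + ℓ • A + μ • (J - 1 - A)) :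
    A' ^ 2 = k • 1 + ℓ • A' + μ • (J - 1 - A') :=
  calc A' ^ 2 = Q * A ^ 2 * Q := by
        rw [← hA, sq, sq]; simp only [mul_assoc]; rw [← mul_assoc Q Q, hQ, one_mul]
    _ = k • (Q * 1 * Q) + ℓ • (Q * A * Q) + μ • (Q * J * Q - Q * 1 * Q - Q * A * Q) := by
        simp only [h, mul_add, add_mul, mul_sub, sub_mul, mul_smul_comm, smul_mul_assoc]
    _ = k • 1 + ℓ • A' + μ • (J - 1 - A') := by rw [mul_one, hQ, hQJ, hJQ, hA]

section GodsilMcKayMatrix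

open Finset Matrix

variable {K : Type*} [Field K] {Ω : Type*} [Fintype Ω] [DecidableEq Ω] (s : Finset Ω)

/-- `(2 / #s) J - I` on the block `s × s`, the identity elsewhere. -/
noncomputable def gmMatrix : Matrix Ω Ω K :=
  of (fun a b => if a ∈ s ∧ b ∈ s then (2 / #s : K) else 0) +
    diagonal fun a => if a ∈ s then -1 else 1

omit [Fintype Ω] in
theorem gmMatrix_transpose : (gmMatrix s : Matrix Ω Ω K)ᵀ = gmMatrix s := by
  ext a b
  by_cases hab : a = b
  · subst hab; rfl
  · simp [gmMatrix, and_comm, diagonal_apply_ne _ hab, diagonal_apply_ne _ (Ne.symm hab)]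

theorem gmMatrix_mul_apply (M : Matrix Ω Ω K) (a b : Ω) :
    (gmMatrix s * M : Matrix Ω Ω K) a b =
      if a ∈ s then 2 / #s * ∑ c ∈ s, M c b - M a b else M a b := by
  rw [gmMatrix, Matrix.add_mul, Matrix.add_apply, diagonal_mul, Matrix.mul_apply]
  by_cases ha : a ∈ s
  · simp only [of_apply, ha, true_and, if_true, ite_mul, zero_mul, sum_ite_mem, univ_inter,
      mul_sum]
    ring
  · simp [ha]

theorem mul_gmMatrix_apply (M : Matrix Ω Ω K) (a b : Ω) :
    (M * gmMatrix s : Matrix Ω Ω K) a b =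
      if b ∈ s then 2 / #s * ∑ c ∈ s, M a c - M a b else M a b := by
  rw [← transpose_apply (M * _), transpose_mul, gmMatrix_transpose, gmMatrix_mul_apply]
  rfl

variable {s}

theorem gmMatrix_mul_self (hs : (#s : K) ≠ 0) :
    gmMatrix s * gmMatrix s = (1 : Matrix Ω Ω K) := by
  ext a b
  have hcol : ∑ c ∈ s, (gmMatrix s : Matrix Ω Ω K) c b = if b ∈ s then 1 else 0 := by
    by_cases hb : b ∈ s
    · simp [gmMatrix, diagonal_apply, hb, sum_add_distrib, sum_ite_eq',
        mul_div_cancel₀ _ hs]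
      norm_num
    · simp [gmMatrix, diagonal_apply, hb]
  rw [gmMatrix_mul_apply, hcol]
  by_cases ha : a ∈ s <;> by_cases hb : b ∈ s <;> by_cases hab : a = b <;>
    simp [gmMatrix, one_apply, ha, hb, hab]

theorem gmMatrix_mul_of_one (hs : (#s : K) ≠ 0) :
    gmMatrix s * of 1 = (of 1 : Matrix Ω Ω K) := by
  ext a b
  by_cases ha : a ∈ s <;> simp [gmMatrix_mul_apply, ha, hs]
  norm_num

theorem of_one_mul_gmMatrix (hs : (#s : K) ≠ 0) :
    of 1 * gmMatrix s = (of 1 : Matrix Ω Ω K) := by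
  calc of 1 * gmMatrix s = (gmMatrix s * of 1)ᵀ := by rw [transpose_mul, gmMatrix_transpose]; rfl
    _ = of 1 := by rw [gmMatrix_mul_of_one hs]; rfl

end GodsilMcKayMatrix

section Switch

variable {Ω : Type*} {G : SimpleGraph Ω} {X : Set Ω} {a b : Ω}

theorem gmSwitch_empty (G : SimpleGraph Ω) : gmSwitch G ∅ = G := by
  ext
  simp [gmSwitch]

theorem gmSwitch_adj_of_mem_iff_mem (h : a ∈ X ↔ b ∈ X) :
    (gmSwitch G X).Adj a b ↔ G.Adj a b := by
  simp only [gmSwitch, h]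
  tauto

theorem gmSwitch_adj_of_halfIn (ha : a ∈ X) (hb : b ∉ X) (hh : halfIn G X b) :
    (gmSwitch G X).Adj a b ↔ ¬ G.Adj a b := by
  have hab : a ≠ b := by rintro rfl; exact hb ha
  simp only [gmSwitch, ha, hb, hh]
  tauto

theorem gmSwitch_adj_of_not_halfIn (ha : a ∈ X) (hb : b ∉ X) (hh : ¬ halfIn G X b) :
    (gmSwitch G X).Adj a b ↔ G.Adj a b := by
  simp only [gmSwitch, ha, hb, hh]
  tauto

end Switch

section SwitchMatrix

open Finset Matrix SimpleGraph

variable {K : Type*} [Field K] {Ω : Type*} [Fintype Ω] [DecidableEq Ω]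
  (G : SimpleGraph Ω) [DecidableRel G.Adj] (s : Finset Ω)

omit [Fintype Ω] [DecidableEq Ω] in
theorem ncard_coe_inter_neighborSet (v : Ω) :
    ((s : Set Ω) ∩ G.neighborSet v).ncard = #{w ∈ s | G.Adj v w} := by
  rw [← Set.ncard_coe_finset, coe_filter]
  rfl

omit [Fintype Ω] [DecidableEq Ω] in
theorem halfIn_coe_iff (v : Ω) : halfIn G s v ↔ 2 * #{w ∈ s | G.Adj v w} = #s := by
  rw [halfIn, ncard_coe_inter_neighborSet, Set.ncard_coe_finset]

omit [Fintype Ω] [DecidableEq Ω] in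
theorem sum_adjMatrix_apply_right (a : Ω) :
    ∑ c ∈ s, G.adjMatrix K a c = (((s : Set Ω) ∩ G.neighborSet a).ncard : K) := by
  simp [ncard_coe_inter_neighborSet]

omit [Fintype Ω] [DecidableEq Ω] in
theorem sum_adjMatrix_apply_left (b : Ω) :
    ∑ c ∈ s, G.adjMatrix K c b = (((s : Set Ω) ∩ G.neighborSet b).ncard : K) := by
  rw [← sum_adjMatrix_apply_right]
  exact sum_congr rfl fun c _ => (G.isSymm_adjMatrix (α := K)).apply b c

variable {G s}

omit [Fintype Ω] [DecidableEq Ω] in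
theorem adjMatrix_gmSwitch_apply_of_mem_of_notMem [DecidableRel (gmSwitch G s).Adj]
    (hs : (#s : K) ≠ 0) {a b : Ω} (ha : a ∈ s) (hb : b ∉ s)
    (hY : ((s : Set Ω) ∩ G.neighborSet b).ncard = 0 ∨ halfIn G s b ∨
      ((s : Set Ω) ∩ G.neighborSet b).ncard = (s : Set Ω).ncard) :
    (gmSwitch G s).adjMatrix K a b =
      2 / #s * (((s : Set Ω) ∩ G.neighborSet b).ncard : K) - G.adjMatrix K a b := by
  have hs' : #s ≠ 0 := by rintro h; simp [h] at hs
  rw [ncard_coe_inter_neighborSet, adjMatrix_apply, adjMatrix_apply]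
  rw [ncard_coe_inter_neighborSet, Set.ncard_coe_finset] at hY
  rcases hY with hnone | hhalf | hall
  · have hnadj : ¬ G.Adj a b := fun hab => by
      simp only [card_eq_zero, filter_eq_empty_iff] at hnone
      exact hnone ha hab.symm
    have hnhalf : ¬ halfIn G s b := by simp [halfIn_coe_iff, hnone, Ne.symm hs']
    simp [gmSwitch_adj_of_not_halfIn ha hb hnhalf, hnadj, hnone]
  · have hhalf' : 2 / #s * (#{w ∈ s | G.Adj b w} : K) = 1 := by
      rw [div_mul_eq_mul_div, ← Nat.cast_ofNat, ← Nat.cast_mul, (halfIn_coe_iff G s b).mp hhalf,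
        div_self hs]
    by_cases hab : G.Adj a b <;> simp [gmSwitch_adj_of_halfIn ha hb hhalf, hab, hhalf']
  · have hadj : G.Adj a b := (filter_card_eq hall a ha).symm
    have hnhalf : ¬ halfIn G s b := by simp [halfIn_coe_iff, hall, hs']
    simp [gmSwitch_adj_of_not_halfIn ha hb hnhalf, hadj, hall, hs]
    norm_num

theorem gmMatrix_mul_adjMatrix_mul_gmMatrix [DecidableRel (gmSwitch G s).Adj] (hs : (#s : K) ≠ 0)
    {d : ℕ} (hreg : ∀ v ∈ s, ((s : Set Ω) ∩ G.neighborSet v).ncard = d)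
    (hY : ∀ v ∉ s, ((s : Set Ω) ∩ G.neighborSet v).ncard = 0 ∨ halfIn G s v ∨
      ((s : Set Ω) ∩ G.neighborSet v).ncard = (s : Set Ω).ncard) :
    gmMatrix s * G.adjMatrix K * gmMatrix s = (gmSwitch G s).adjMatrix K := by
  have hrow (a : Ω) : ∑ c ∈ s, (gmMatrix s * G.adjMatrix K : Matrix Ω Ω K) a c =
      if a ∈ s then (d : K) else (((s : Set Ω) ∩ G.neighborSet a).ncard : K) := by
    simp_rw [gmMatrix_mul_apply, sum_adjMatrix_apply_left]
    split_ifs with ha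
    · rw [sum_sub_distrib, sum_congr rfl fun c hc => by rw [hreg c hc], sum_const, nsmul_eq_mul,
        sum_adjMatrix_apply_right, hreg a ha]
      field_simp
      ring
    · exact sum_adjMatrix_apply_right G s a
  ext a b
  rw [mul_gmMatrix_apply, hrow, gmMatrix_mul_apply, sum_adjMatrix_apply_left]
  by_cases ha : a ∈ s <;> by_cases hb : b ∈ s <;> simp only [ha, hb, if_true, if_false]
  · rw [hreg b hb, adjMatrix_apply, adjMatrix_apply,
      if_congr (gmSwitch_adj_of_mem_iff_mem (iff_of_true ha hb)) rfl rfl]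
    ring
  · exact (adjMatrix_gmSwitch_apply_of_mem_of_notMem hs ha hb (hY b hb)).symm
  · rw [← (isSymm_adjMatrix _).apply a b, ← (isSymm_adjMatrix _).apply a b,
      adjMatrix_gmSwitch_apply_of_mem_of_notMem hs hb ha (hY a ha)]
  · rw [adjMatrix_apply, adjMatrix_apply,
      if_congr (gmSwitch_adj_of_mem_iff_mem (iff_of_false ha hb)) rfl rfl]

end SwitchMatrix

open scoped Classical in
theorem godsilMcKay_switch_isSRG {Ω : Type*} [Fintype Ω] (G : SimpleGraph Ω) (X : Set Ω)
    (hreg : ∃ d : ℕ, ∀ v ∈ X, (X ∩ G.neighborSet v).ncard = d)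
    (hY : ∀ v ∉ X, (X ∩ G.neighborSet v).ncard = 0 ∨ halfIn G X v ∨
      (X ∩ G.neighborSet v).ncard = X.ncard)
    (v k l m : ℕ) (hG : G.IsSRGWith v k l m) :
    (gmSwitch G X).IsSRGWith v k l m := by
  lift X to Finset Ω using X.toFinite
  obtain rfl | hne := X.eq_empty_or_nonempty
  · simpa [gmSwitch_empty] using hG
  obtain ⟨d, hreg⟩ := hreg
  have hX : (X.card : ℚ) ≠ 0 := by exact_mod_cast hne.card_pos.ne'
  apply SimpleGraph.isSRGWith_of_adjMatrix_sq _ hG.card (α := ℚ)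
  have hsq := hG.matrix_eq (α := ℚ)
  rw [SimpleGraph.adjMatrix_compl] at hsq ⊢
  exact sq_eq_of_conj_involution (gmMatrix_mul_self hX) (gmMatrix_mul_of_one hX)
    (of_one_mul_gmMatrix hX) (gmMatrix_mul_adjMatrix_mul_gmMatrix hX hreg hY) hsq
end

section
/- Let Q be a non-singular quadric in PG(n,2) of projective index g ≥ 1 with point-graph Γ, and let Γ_0 be the switched graph built from a single point P of Q (the case s = 0). Then the map φ fixing P and all points R with ⟨P,R⟩ ⊄ Q, and sending each point Q' ≠ P with line PQ' ⊂ Q to the third point of Q on the line PQ', is a graph isomorphism from Γ to Γ_0. -/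
/-!
Over `𝔽₂` a projective point is a nonzero vector, and the line through two singular points
`p ≠ q` has third point `p + q`, with `Q (p + q) = B (p, q)` for the polar form `B`. So the line
lies on the quadric iff `B (p, q) = 0` and is a 2-secant iff `B (p, q) = 1`. Relative to `P`, the
type (ii) points are the `v ≠ P` with `B (P, v) = 0` and the type (iii) points those with
`B (P, v) = 1`. The map `v ↦ P + v` on type (ii) points is an involution preserving `B (P, ·)`,
hence the types, and it shifts `B (a, b)` by `B (P, ·)` of the point that is not of type (ii),
which is `1` exactly for mixed pairs. Thus lines of the quadric become 2-secants on mixed pairs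
and stay lines otherwise.
-/

open scoped LinearAlgebra.Projectivization
open QuadraticMap

namespace Projectivization

variable {V : Type*} [AddCommGroup V]

theorem rep_injective {K : Type*} [DivisionRing K] [Module K V] :
    Function.Injective (Projectivization.rep : ℙ K V → V) := fun p q h => by
  rw [← mk_rep p, ← mk_rep q]
  simp_rw [h]

theorem rep_mem_submodule_iff {K : Type*} [DivisionRing K] [Module K V] (v p : ℙ K V) :
    v.rep ∈ p.submodule ↔ v = p := by
  rw [submodule_eq, Submodule.mem_span_singleton,
    ← mk_eq_mk_iff' K _ _ v.rep_nonzero p.rep_nonzero, mk_rep, mk_rep]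

theorem sup_submodule_eq_span_pair {K : Type*} [DivisionRing K] [Module K V] (p q : ℙ K V) :
    p.submodule ⊔ q.submodule = Submodule.span K {p.rep, q.rep} := by
  rw [submodule_eq, submodule_eq, ← Submodule.span_union, Set.singleton_union]

variable [Module (ZMod 2) V]

theorem rep_mk_zmod2 (v : V) (hv : v ≠ 0) : (mk (ZMod 2) v hv).rep = v := by
  obtain ⟨a, ha⟩ := exists_smul_eq_mk_rep (ZMod 2) v hv
  rwa [Subsingleton.elim a 1, one_smul, eq_comm] at ha

theorem rep_add_rep_ne_zero {p q : ℙ (ZMod 2) V} (hpq : p ≠ q) : p.rep + q.rep ≠ 0 := by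
  rw [Ne, add_eq_zero_iff_eq_neg, ZModModule.neg_eq_self]
  exact fun h => hpq (rep_injective h)

noncomputable def thirdPoint (p q : ℙ (ZMod 2) V) (hpq : p ≠ q) : ℙ (ZMod 2) V :=
  mk (ZMod 2) (p.rep + q.rep) (rep_add_rep_ne_zero hpq)

theorem rep_thirdPoint {p q : ℙ (ZMod 2) V} (hpq : p ≠ q) :
    (thirdPoint p q hpq).rep = p.rep + q.rep :=
  rep_mk_zmod2 _ _

theorem thirdPoint_ne_left {p q : ℙ (ZMod 2) V} (hpq : p ≠ q) : thirdPoint p q hpq ≠ p := by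
  intro h
  have := congrArg Projectivization.rep h
  rw [rep_thirdPoint, add_eq_left] at this
  exact q.rep_nonzero this

theorem thirdPoint_ne_right {p q : ℙ (ZMod 2) V} (hpq : p ≠ q) : thirdPoint p q hpq ≠ q := by
  intro h
  have := congrArg Projectivization.rep h
  rw [rep_thirdPoint, add_eq_right] at this
  exact p.rep_nonzero this

theorem rep_mem_span_pair_iff {x p q : ℙ (ZMod 2) V} (hpq : p ≠ q) :
    x.rep ∈ Submodule.span (ZMod 2) {p.rep, q.rep} ↔ x = p ∨ x = q ∨ x = thirdPoint p q hpq := by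
  have hcoeff : ∀ c : ZMod 2, c = 0 ∨ c = 1 := by decide
  simp only [← (rep_injective (K := ZMod 2) (V := V)).eq_iff, rep_thirdPoint,
    Submodule.mem_span_pair]
  constructor
  · rintro ⟨a, b, hab⟩
    rcases hcoeff a with rfl | rfl <;> rcases hcoeff b with rfl | rfl <;>
      simp only [zero_smul, one_smul, zero_add, add_zero] at hab
    exacts [absurd hab.symm x.rep_nonzero, .inr (.inl hab.symm), .inl hab.symm,
      .inr (.inr hab.symm)]
  · rintro (h | h | h) <;> rw [h]
    exacts [⟨1, 0, by simp⟩, ⟨0, 1, by simp⟩, ⟨1, 1, by simp⟩]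

end Projectivization

open Projectivization

section QuadricPoint

variable {V : Type*} [AddCommGroup V] [Module (ZMod 2) V] (Q : QuadraticForm (ZMod 2) V)

theorem map_rep_add_rep (p q : QuadricPoint Q) :
    Q (p.1.rep + q.1.rep) = polar Q p.1.rep q.1.rep := by
  rw [QuadraticMap.map_add Q, p.2, q.2, zero_add, zero_add]

theorem polar_rep_self (p : QuadricPoint Q) : polar Q p.1.rep p.1.rep = 0 := by
  rw [polar_self, p.2, smul_zero]

theorem totallySingular_sup_iff_polar_eq_zero (p q : QuadricPoint Q) :
    totallySingular Q (p.1.submodule ⊔ q.1.submodule) ↔ polar Q p.1.rep q.1.rep = 0 := by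
  rw [sup_submodule_eq_span_pair]
  refine ⟨fun h => ?_, fun h v hv => ?_⟩
  · rw [← map_rep_add_rep]
    exact h _ (Submodule.add_mem _ (Submodule.subset_span (by simp))
      (Submodule.subset_span (by simp)))
  · obtain ⟨a, b, rfl⟩ := Submodule.mem_span_pair.mp hv
    simp [QuadraticMap.map_add Q, QuadraticMap.map_smul, polar_smul_left, polar_smul_right,
      p.2, q.2, h]

theorem secant2_iff_polar_ne_zero {p q : QuadricPoint Q} (hpq : p ≠ q) :
    secant2 Q p q ↔ polar Q p.1.rep q.1.rep ≠ 0 := by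
  have hpq' : p.1 ≠ q.1 := Subtype.coe_ne_coe.mpr hpq
  set t := thirdPoint p.1 q.1 hpq'
  have ht : Q t.rep = polar Q p.1.rep q.1.rep := by rw [rep_thirdPoint, map_rep_add_rep]
  have hS : {x : ℙ (ZMod 2) V | x.rep ∈ p.1.submodule ⊔ q.1.submodule ∧ Q x.rep = 0} =
      {x | x = p.1 ∨ x = q.1 ∨ x = t ∧ polar Q p.1.rep q.1.rep = 0} := by
    ext x
    simp only [Set.mem_ofPred_eq, sup_submodule_eq_span_pair, rep_mem_span_pair_iff hpq']
    constructor
    · rintro ⟨rfl | rfl | rfl, hx⟩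
      exacts [.inl rfl, .inr (.inl rfl), .inr (.inr ⟨rfl, ht ▸ hx⟩)]
    · rintro (rfl | rfl | ⟨rfl, h⟩)
      exacts [⟨.inl rfl, p.2⟩, ⟨.inr (.inl rfl), q.2⟩, ⟨.inr (.inr rfl), ht ▸ h⟩]
  unfold secant2
  rw [hS]
  by_cases hpol : polar Q p.1.rep q.1.rep = 0
  · simp only [hpol, and_true, ne_eq, not_true_eq_false, iff_false]
    rw [show {x | x = p.1 ∨ x = q.1 ∨ x = t} = {p.1, q.1, t} from rfl,
      Set.ncard_eq_three.mpr ⟨_, _, _, hpq', (thirdPoint_ne_left hpq').symm,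
        (thirdPoint_ne_right hpq').symm, rfl⟩]
    decide
  · simp only [hpol, and_false, or_false, ne_eq, not_false_eq_true, iff_true]
    exact Set.ncard_pair hpq'

theorem pointGraph_adj_iff (p q : QuadricPoint Q) :
    (pointGraph Q).Adj p q ↔ p ≠ q ∧ polar Q p.1.rep q.1.rep = 0 :=
  and_congr_right' (totallySingular_sup_iff_polar_eq_zero Q p q)

theorem gammaS_adj_iff (α : Submodule (ZMod 2) V) (p q : QuadricPoint Q) :
    (gammaS Q α).Adj p q ↔ p ≠ q ∧ (mixedPair Q α p q ↔ polar Q p.1.rep q.1.rep ≠ 0) := by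
  refine and_congr_right fun hpq => ?_
  rw [secant2_iff_polar_ne_zero Q hpq, totallySingular_sup_iff_polar_eq_zero]
  by_cases hmix : mixedPair Q α p q <;> simp [hmix]

open scoped Classical

variable (P : QuadricPoint Q)

theorem typeII_iff_polar (v : QuadricPoint Q) :
    typeII Q P.1.submodule v ↔ v ≠ P ∧ polar Q P.1.rep v.1.rep = 0 := by
  rw [typeII, rep_mem_submodule_iff, totallySingular_sup_iff_polar_eq_zero, ← Subtype.ext_iff]

theorem typeIII_iff_polar (v : QuadricPoint Q) :
    typeIII Q P.1.submodule v ↔ polar Q P.1.rep v.1.rep ≠ 0 := by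
  rw [typeIII, rep_mem_submodule_iff, totallySingular_sup_iff_polar_eq_zero, ← Subtype.ext_iff]
  refine ⟨And.right, fun h => ⟨?_, h⟩⟩
  rintro rfl
  exact h (polar_rep_self Q v)

theorem polar_rep_eq_ite (v : QuadricPoint Q) :
    polar Q P.1.rep v.1.rep = if typeIII Q P.1.submodule v then 1 else 0 := by
  have hcases : ∀ c : ZMod 2, c ≠ 0 → c = 1 := by decide
  split_ifs with h
  · exact hcases _ ((typeIII_iff_polar Q P v).1 h)
  · exact not_not.1 (mt (typeIII_iff_polar Q P v).2 h)

theorem coe_ne_of_typeII {v : QuadricPoint Q} (h : typeII Q P.1.submodule v) : P.1 ≠ v.1 :=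
  Subtype.coe_ne_coe.2 ((typeII_iff_polar Q P v).1 h).1.symm

theorem map_rep_add_rep_of_typeII {v : QuadricPoint Q} (h : typeII Q P.1.submodule v) :
    Q (P.1.rep + v.1.rep) = 0 := by
  rw [map_rep_add_rep, ((typeII_iff_polar Q P v).1 h).2]

noncomputable def switchMap (v : QuadricPoint Q) : QuadricPoint Q :=
  if h : typeII Q P.1.submodule v then
    ⟨thirdPoint P.1 v.1 (coe_ne_of_typeII Q P h), by
      rw [rep_thirdPoint]; exact map_rep_add_rep_of_typeII Q P h⟩
  else v

variable {Q P}

theorem switchMap_of_not_typeII {v : QuadricPoint Q} (h : ¬ typeII Q P.1.submodule v) :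
    switchMap Q P v = v :=
  dif_neg h

theorem coe_switchMap_of_typeII {v : QuadricPoint Q} (h : typeII Q P.1.submodule v) :
    (switchMap Q P v).1 = thirdPoint P.1 v.1 (coe_ne_of_typeII Q P h) := by
  rw [switchMap, dif_pos h]

theorem rep_switchMap (v : QuadricPoint Q) :
    (switchMap Q P v).1.rep = (if typeII Q P.1.submodule v then P.1.rep else 0) + v.1.rep := by
  split_ifs with h
  · rw [coe_switchMap_of_typeII h, rep_thirdPoint]
  · rw [switchMap_of_not_typeII h, zero_add]

theorem polar_rep_switchMap (v : QuadricPoint Q) :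
    polar Q P.1.rep (switchMap Q P v).1.rep = polar Q P.1.rep v.1.rep := by
  rw [rep_switchMap, polar_add_right]
  split_ifs
  · rw [polar_rep_self, zero_add]
  · rw [polar_zero_right, zero_add]

theorem switchMap_ne_self_of_typeII {v : QuadricPoint Q} (h : typeII Q P.1.submodule v) :
    switchMap Q P v ≠ v :=
  Subtype.coe_ne_coe.1 (coe_switchMap_of_typeII h ▸ thirdPoint_ne_right _)

theorem switchMap_ne_of_typeII {v : QuadricPoint Q} (h : typeII Q P.1.submodule v) :
    switchMap Q P v ≠ P :=
  Subtype.coe_ne_coe.1 (coe_switchMap_of_typeII h ▸ thirdPoint_ne_left _)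

theorem typeII_switchMap_iff (v : QuadricPoint Q) :
    typeII Q P.1.submodule (switchMap Q P v) ↔ typeII Q P.1.submodule v := by
  by_cases h : typeII Q P.1.submodule v
  · refine iff_of_true ?_ h
    rw [typeII_iff_polar, polar_rep_switchMap]
    exact ⟨switchMap_ne_of_typeII h, ((typeII_iff_polar Q P v).1 h).2⟩
  · rw [switchMap_of_not_typeII h]

theorem typeIII_switchMap_iff (v : QuadricPoint Q) :
    typeIII Q P.1.submodule (switchMap Q P v) ↔ typeIII Q P.1.submodule v := by
  rw [typeIII_iff_polar, typeIII_iff_polar, polar_rep_switchMap]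

theorem mixedPair_switchMap_iff (a b : QuadricPoint Q) :
    mixedPair Q P.1.submodule (switchMap Q P a) (switchMap Q P b) ↔
      mixedPair Q P.1.submodule a b := by
  simp only [mixedPair, typeII_switchMap_iff, typeIII_switchMap_iff]

theorem switchMap_involutive : Function.Involutive (switchMap Q P) := by
  intro v
  by_cases h : typeII Q P.1.submodule v
  · refine Subtype.ext (rep_injective ?_)
    rw [rep_switchMap, rep_switchMap, if_pos ((typeII_switchMap_iff v).2 h), if_pos h,
      ← add_assoc, ZModModule.add_self, zero_add]
  · rw [switchMap_of_not_typeII h, switchMap_of_not_typeII h]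

theorem polar_rep_switchMap_switchMap (a b : QuadricPoint Q) :
    polar Q (switchMap Q P a).1.rep (switchMap Q P b).1.rep =
      polar Q a.1.rep b.1.rep + if mixedPair Q P.1.submodule a b then 1 else 0 := by
  have hexcl : ∀ v, typeII Q P.1.submodule v → ¬ typeIII Q P.1.submodule v :=
    fun v h h' => h'.2 h.2
  rw [rep_switchMap, rep_switchMap]
  by_cases ha : typeII Q P.1.submodule a <;> by_cases hb : typeII Q P.1.submodule b <;>
    simp [ha, hb, hexcl, mixedPair, polar_add_left, polar_add_right, P.2, add_comm,
      polar_comm Q a.1.rep P.1.rep, polar_rep_eq_ite Q P a, polar_rep_eq_ite Q P b]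

theorem submodule_switchMap_le (v : QuadricPoint Q) :
    (switchMap Q P v).1.submodule ≤ P.1.submodule ⊔ v.1.submodule := by
  rw [submodule_eq, Submodule.span_singleton_le_iff_mem, rep_switchMap]
  refine Submodule.add_mem _ ?_ (Submodule.mem_sup_right ((rep_mem_submodule_iff _ _).2 rfl))
  split_ifs
  · exact Submodule.mem_sup_left ((rep_mem_submodule_iff _ _).2 rfl)
  · exact zero_mem _

theorem gammaS_adj_switchMap_iff (a b : QuadricPoint Q) :
    (gammaS Q P.1.submodule).Adj (switchMap Q P a) (switchMap Q P b) ↔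
      (pointGraph Q).Adj a b := by
  have hflip : ∀ x : ZMod 2, x + 1 ≠ 0 ↔ x = 0 := by decide
  rw [gammaS_adj_iff, pointGraph_adj_iff, switchMap_involutive.injective.ne_iff,
    mixedPair_switchMap_iff, polar_rep_switchMap_switchMap]
  refine and_congr_right fun _ => ?_
  split_ifs with hmix
  · simp only [hmix, hflip, true_iff]
  · simp only [hmix, add_zero, false_iff, not_not]

end QuadricPoint

theorem gamma0_isomorphic_pointGraph_general (n g : ℕ)
    (Q : QuadraticForm (ZMod 2) (Fin (n + 1) → ZMod 2)) (P : QuadricPoint Q) :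
    ∃ φ : pointGraph Q ≃g gammaS Q P.1.submodule,
      (∀ v : QuadricPoint Q, ¬ typeII Q P.1.submodule v → φ v = v) ∧
      (∀ v : QuadricPoint Q, typeII Q P.1.submodule v →
        (φ v).1.submodule ≤ P.1.submodule ⊔ v.1.submodule ∧ φ v ≠ v ∧ φ v ≠ P) :=
  ⟨⟨switchMap_involutive.toPerm _, gammaS_adj_switchMap_iff _ _⟩,
    fun _ hv => switchMap_of_not_typeII hv,
    fun v hv => ⟨submodule_switchMap_le v, switchMap_ne_self_of_typeII hv,
      switchMap_ne_of_typeII hv⟩⟩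

theorem gamma0_isomorphic_pointGraph (n g : ℕ) (hg : 1 ≤ g)
    (Q : QuadraticForm (ZMod 2) (Fin (n + 1) → ZMod 2)) (hQ : quadricNonsingular Q)
    (hgi : projIndex Q g) (P : QuadricPoint Q) :
    ∃ φ : pointGraph Q ≃g gammaS Q P.1.submodule,
      (∀ v : QuadricPoint Q, ¬ typeII Q P.1.submodule v → φ v = v) ∧
      (∀ v : QuadricPoint Q, typeII Q P.1.submodule v →
        (φ v).1.submodule ≤ P.1.submodule ⊔ v.1.submodule ∧ φ v ≠ v ∧ φ v ≠ P) :=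
  gamma0_isomorphic_pointGraph_general n g Q P
end

section
/- Let Q be a non-singular quadric in PG(n,2) with n even (so Q = P_n is parabolic with nucleus N), let α be an s-space contained in Q, and let R be a point of Q with ⟨α,R⟩ not contained in Q. Then the (s+1)-space ⟨α,R⟩ does not contain the nucleus N. -/
/-! Since `⟨α, x⟩` is not on the quadric, some `a ∈ α` is not orthogonal to `x`. If the nucleus
`ν` were in `⟨α, x⟩`, then `ν = w + c • x` with `w ∈ α` and `c ≠ 0` (as `ν` is off the quadric), so
`0 = polar a ν = c · polar a x`, because `a` is orthogonal both to `ν` (tangency at `a`) and to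
`w` (as `α` is totally singular). -/

section TotallySingular

open QuadraticMap

variable {K V : Type*} [Field K] [AddCommGroup V] [Module K V]
  {Q : QuadraticForm K V} {W : Submodule K V}

lemma totallySingular.polar_eq_zero (hW : totallySingular Q W) {a b : V} (ha : a ∈ W)
    (hb : b ∈ W) : polar Q a b = 0 := by
  simp only [polar, hW _ (W.add_mem ha hb), hW a ha, hW b hb, sub_zero]

lemma totallySingular.exists_polar_ne_zero_of_not_sup_span {x : V}
    (hW : totallySingular Q W) (hx : Q x = 0)
    (h : ¬ totallySingular Q (W ⊔ Submodule.span K {x})) : ∃ a ∈ W, polar Q a x ≠ 0 := by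
  simp only [totallySingular, not_forall] at h
  obtain ⟨v, hv, hQv⟩ := h
  obtain ⟨a, ha, _, hc, rfl⟩ := Submodule.mem_sup.mp hv
  obtain ⟨c, rfl⟩ := Submodule.mem_span_singleton.mp hc
  refine ⟨a, ha, fun hax => hQv ?_⟩
  rw [QuadraticMap.map_add (⇑Q), QuadraticMap.map_smul, polar_smul_right, hW a ha, hx, hax]
  simp

lemma totallySingular.polar_eq_zero_of_mem_sup_span {x v a : V} (hW : totallySingular Q W)
    (hv : v ∈ W ⊔ Submodule.span K {x}) (hvW : v ∉ W) (ha : a ∈ W) (hav : polar Q a v = 0) :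
    polar Q a x = 0 := by
  obtain ⟨w, hw, _, hc, rfl⟩ := Submodule.mem_sup.mp hv
  obtain ⟨c, rfl⟩ := Submodule.mem_span_singleton.mp hc
  have hc0 : c ≠ 0 := by
    rintro rfl
    exact hvW (by simpa using hw)
  rw [polar_add_right, hW.polar_eq_zero ha hw, zero_add, polar_smul_right, smul_eq_mul] at hav
  exact (mul_eq_zero.mp hav).resolve_left hc0

end TotallySingular

theorem nucleus_not_in_span_general (n : ℕ)
    (Q : QuadraticForm (ZMod 2) (Fin (n + 1) → ZMod 2))
    (ν : Fin (n + 1) → ZMod 2) (hνQ : Q ν ≠ 0)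
    (hν : ∀ p : Fin (n + 1) → ZMod 2, p ≠ 0 → Q p = 0 → QuadraticMap.polar ⇑Q p ν = 0)
    (α : Submodule (ZMod 2) (Fin (n + 1) → ZMod 2)) (hα : totallySingular Q α)
    (x : Fin (n + 1) → ZMod 2) (hxQ : Q x = 0)
    (hnotts : ¬ totallySingular Q (α ⊔ Submodule.span (ZMod 2) {x})) :
    ν ∉ α ⊔ Submodule.span (ZMod 2) {x} := by
  intro hmem
  obtain ⟨a, ha, hax⟩ := hα.exists_polar_ne_zero_of_not_sup_span hxQ hnotts
  have ha0 : a ≠ 0 := by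
    rintro rfl
    exact hax (QuadraticMap.polar_zero_left (Q := Q) x)
  have hνα : ν ∉ α := fun h => hνQ (hα ν h)
  exact hax (hα.polar_eq_zero_of_mem_sup_span hmem hνα ha (hν a ha0 (hα a ha)))

theorem nucleus_not_in_span (n s : ℕ) (hn : Even n)
    (Q : QuadraticForm (ZMod 2) (Fin (n + 1) → ZMod 2)) (hQ : quadricNonsingular Q)
    (ν : Fin (n + 1) → ZMod 2) (hν0 : ν ≠ 0) (hνQ : Q ν ≠ 0)
    (hν : ∀ p : Fin (n + 1) → ZMod 2, p ≠ 0 → Q p = 0 → QuadraticMap.polar ⇑Q p ν = 0)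
    (α : Submodule (ZMod 2) (Fin (n + 1) → ZMod 2)) (hα : totallySingular Q α)
    (hαd : Module.finrank (ZMod 2) ↥α = s + 1)
    (x : Fin (n + 1) → ZMod 2) (hx0 : x ≠ 0) (hxQ : Q x = 0) (hxα : x ∉ α)
    (hnotts : ¬ totallySingular Q (α ⊔ Submodule.span (ZMod 2) {x})) :
    ν ∉ α ⊔ Submodule.span (ZMod 2) {x} :=
  nucleus_not_in_span_general n Q ν hνQ hν α hα x hxQ hnotts
end
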